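/- arXiv:2410.06445 — 2 statements merged into one kernel-verified Lean document; each statement's English description precedes it below -/
import Mathlib

section
/- For the Walker metric g_a on ℝ⁴, the Ricci tensor is symmetric and its only possibly nonzero components are: ρ_{13} = ρ_{31} = (1/2)a_{11}, ρ_{14} = ρ_{41} = (1/2)a_{12}, ρ_{23} = ρ_{32} = (1/2)a_{12}, ρ_{24} = ρ_{42} = (1/2)a_{22}, ρ_{33} = (1/2)(a_2² + a·a_{11} + a·a_{22} − 2a_{24}), ρ_{34} = ρ_{43} = (1/2)(−a_1 a_2 + a_{14} + a_{23}), ρ_{44} = (1/2)(a_1² + a·a_{11} − 2a_{13} + a·a_{22}); all other components vanish identically. -/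
open scoped BigOperators

/-- Partial derivative of a function on `ℝ⁴` in the `i`-th coordinate direction. -/
noncomputable def pd (i : Fin 4) (f : (Fin 4 → ℝ) → ℝ) : (Fin 4 → ℝ) → ℝ :=
  fun x => fderiv ℝ f x (Pi.single i 1)

/-- The Walker metric `g_a`: coordinate components `g_{ij}`. -/
noncomputable def gLow (a : (Fin 4 → ℝ) → ℝ) (i j : Fin 4) : (Fin 4 → ℝ) → ℝ :=
  fun x =>
    if (i = 0 ∧ j = 2) ∨ (i = 2 ∧ j = 0) ∨ (i = 1 ∧ j = 3) ∨ (i = 3 ∧ j = 1) then 1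
    else if (i = 2 ∧ j = 2) ∨ (i = 3 ∧ j = 3) then a x
    else 0

/-- The inverse metric components `g^{ij}`. -/
noncomputable def gUp (a : (Fin 4 → ℝ) → ℝ) (i j : Fin 4) : (Fin 4 → ℝ) → ℝ :=
  fun x =>
    if (i = 0 ∧ j = 2) ∨ (i = 2 ∧ j = 0) ∨ (i = 1 ∧ j = 3) ∨ (i = 3 ∧ j = 1) then 1
    else if (i = 0 ∧ j = 0) ∨ (i = 1 ∧ j = 1) then -(a x)
    else 0

/-- Christoffel symbols `Γ^k_{ij}` of the Walker metric `g_a`. -/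
noncomputable def christoffel (a : (Fin 4 → ℝ) → ℝ) (k i j : Fin 4) : (Fin 4 → ℝ) → ℝ :=
  fun x => (1/2) * ∑ l : Fin 4,
    gUp a k l x * (pd i (gLow a j l) x + pd j (gLow a i l) x - pd l (gLow a i j) x)

/-- Curvature tensor components `R^l_{ijk}` of the Walker metric `g_a`. -/
noncomputable def curv (a : (Fin 4 → ℝ) → ℝ) (l i j k : Fin 4) : (Fin 4 → ℝ) → ℝ :=
  fun x => pd i (christoffel a l j k) x - pd j (christoffel a l i k) x
    + ∑ m : Fin 4,
        (christoffel a l i m x * christoffel a m j k x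
          - christoffel a l j m x * christoffel a m i k x)

/-- The `(0,4)`-curvature tensor `R_{ijkl} = Σ_m g_{ml} R^m_{ijk}`. -/
noncomputable def curvLow (a : (Fin 4 → ℝ) → ℝ) (i j k l : Fin 4) : (Fin 4 → ℝ) → ℝ :=
  fun x => ∑ m : Fin 4, gLow a m l x * curv a m i j k x

/-- Ricci tensor components `ρ_{jk} = Σ_i R^i_{ijk}`. -/
noncomputable def ricci (a : (Fin 4 → ℝ) → ℝ) (j k : Fin 4) : (Fin 4 → ℝ) → ℝ :=
  fun x => ∑ i : Fin 4, curv a i i j k x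

/-- Scalar curvature `τ = Σ_{j,k} g^{jk} ρ_{jk}`. -/
noncomputable def scalarCurv (a : (Fin 4 → ℝ) → ℝ) : (Fin 4 → ℝ) → ℝ :=
  fun x => ∑ j : Fin 4, ∑ k : Fin 4, gUp a j k x * ricci a j k x

/-- Covariant derivative of the Ricci tensor:
`(∇_i ρ)_{jk} = ∂_i ρ_{jk} − Σ_m Γ^m_{ij} ρ_{mk} − Σ_m Γ^m_{ik} ρ_{jm}`. -/
noncomputable def covRicci (a : (Fin 4 → ℝ) → ℝ) (i j k : Fin 4) : (Fin 4 → ℝ) → ℝ :=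
  fun x => pd i (ricci a j k) x
    - ∑ m : Fin 4, christoffel a m i j x * ricci a m k x
    - ∑ m : Fin 4, christoffel a m i k x * ricci a j m x

/-- Partial derivative of a function on `ℝ²` in the `i`-th coordinate direction. -/
noncomputable def pd2 (i : Fin 2) (f : (Fin 2 → ℝ) → ℝ) : (Fin 2 → ℝ) → ℝ :=
  fun x => fderiv ℝ f x (Pi.single i 1)


section WalkerAux

lemma contDiff_pd {f : (Fin 4 → ℝ) → ℝ} (hf : ContDiff ℝ (⊤ : ℕ∞) f) (i : Fin 4) :
    ContDiff ℝ (⊤ : ℕ∞) (pd i f) :=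
  (hf.fderiv_right (by simp)).clm_apply contDiff_const

lemma diff_pd {f : (Fin 4 → ℝ) → ℝ} (hf : ContDiff ℝ (⊤ : ℕ∞) f) (i : Fin 4) :
    Differentiable ℝ (pd i f) := (contDiff_pd hf i).differentiable (by simp)

lemma pd_comm {f : (Fin 4 → ℝ) → ℝ} (hf : ContDiff ℝ (⊤ : ℕ∞) f) (i j : Fin 4) (x : Fin 4 → ℝ) :
    pd i (pd j f) x = pd j (pd i f) x := by
  have hd : Differentiable ℝ f := hf.differentiable (by simp)
  have hf' : Differentiable ℝ (fderiv ℝ f) := (hf.fderiv_right (m := 1) (by exact WithTop.coe_le_coe.mpr le_top)).differentiable one_ne_zero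
  have expand : ∀ v w : Fin 4 → ℝ,
      fderiv ℝ (fun y => fderiv ℝ f y v) x w = fderiv ℝ (fderiv ℝ f) x w v := by
    intro v w
    rw [fderiv_clm_apply (hf' x) (differentiableAt_const v)]
    simp
  have hsymm := second_derivative_symmetric (f := f) (fun y => (hd y).hasFDerivAt)
      ((hf' x).hasFDerivAt) (Pi.single i 1) (Pi.single j 1)
  show fderiv ℝ (fun y => fderiv ℝ f y (Pi.single j 1)) x (Pi.single i 1)
      = fderiv ℝ (fun y => fderiv ℝ f y (Pi.single i 1)) x (Pi.single j 1)
  rw [expand, expand]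
  exact hsymm

lemma pd_add {f g : (Fin 4 → ℝ) → ℝ} (hf : Differentiable ℝ f) (hg : Differentiable ℝ g)
    (i : Fin 4) (x : Fin 4 → ℝ) :
    pd i (fun y => f y + g y) x = pd i f x + pd i g x := by
  simp [pd, fderiv_fun_add (hf x) (hg x)]

lemma pd_sub {f g : (Fin 4 → ℝ) → ℝ} (hf : Differentiable ℝ f) (hg : Differentiable ℝ g)
    (i : Fin 4) (x : Fin 4 → ℝ) :
    pd i (fun y => f y - g y) x = pd i f x - pd i g x := by
  simp [pd, fderiv_fun_sub (hf x) (hg x)]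

lemma pd_mul {f g : (Fin 4 → ℝ) → ℝ} (hf : Differentiable ℝ f) (hg : Differentiable ℝ g)
    (i : Fin 4) (x : Fin 4 → ℝ) :
    pd i (fun y => f y * g y) x = pd i f x * g x + f x * pd i g x := by
  simp [pd, fderiv_fun_mul (hf x) (hg x)]; ring

lemma pd_const_mul {f : (Fin 4 → ℝ) → ℝ} (hf : Differentiable ℝ f) (c : ℝ)
    (i : Fin 4) (x : Fin 4 → ℝ) :
    pd i (fun y => c * f y) x = c * pd i f x := by
  simp [pd, fderiv_const_mul (hf x) c]

lemma pd_zero (i : Fin 4) (x : Fin 4 → ℝ) : pd i (fun _ => (0:ℝ)) x = 0 := by simp [pd]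

lemma pd_gLow (a : (Fin 4 → ℝ) → ℝ) (i j l : Fin 4) (x : Fin 4 → ℝ) :
    pd i (gLow a j l) x = if (j = 2 ∧ l = 2) ∨ (j = 3 ∧ l = 3) then pd i a x else 0 := by
  by_cases h : (j = 2 ∧ l = 2) ∨ (j = 3 ∧ l = 3)
  · rw [if_pos h]
    have hg : gLow a j l = a := by
      funext y
      rcases h with ⟨h1, h2⟩ | ⟨h1, h2⟩ <;> subst h1 <;> subst h2 <;> simp [gLow]
    rw [hg]
  · rw [if_neg h]
    have hg : gLow a j l = fun _ =>
        if (j = 0 ∧ l = 2) ∨ (j = 2 ∧ l = 0) ∨ (j = 1 ∧ l = 3) ∨ (j = 3 ∧ l = 1)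
        then (1:ℝ) else 0 := by
      funext y
      simp only [gLow, if_neg h]
    rw [hg]
    split_ifs <;> simp [pd]

/-- Closed form for the Christoffel symbols of the Walker metric. -/
noncomputable def Gam (a : (Fin 4 → ℝ) → ℝ) (k i j : Fin 4) : (Fin 4 → ℝ) → ℝ := fun x =>
  if k = 0 then
    if (i = 0 ∧ j = 2) ∨ (i = 2 ∧ j = 0) then (1/2) * pd 0 a x
    else if (i = 1 ∧ j = 2) ∨ (i = 2 ∧ j = 1) then (1/2) * pd 1 a x
    else if (i = 2 ∧ j = 3) ∨ (i = 3 ∧ j = 2) then (1/2) * pd 3 a x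
    else if i = 2 ∧ j = 2 then (1/2) * (a x * pd 0 a x + pd 2 a x)
    else if i = 3 ∧ j = 3 then (1/2) * (a x * pd 0 a x - pd 2 a x)
    else 0
  else if k = 1 then
    if (i = 0 ∧ j = 3) ∨ (i = 3 ∧ j = 0) then (1/2) * pd 0 a x
    else if (i = 1 ∧ j = 3) ∨ (i = 3 ∧ j = 1) then (1/2) * pd 1 a x
    else if (i = 2 ∧ j = 3) ∨ (i = 3 ∧ j = 2) then (1/2) * pd 2 a x
    else if i = 2 ∧ j = 2 then (1/2) * (a x * pd 1 a x - pd 3 a x)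
    else if i = 3 ∧ j = 3 then (1/2) * (a x * pd 1 a x + pd 3 a x)
    else 0
  else if k = 2 then
    if (i = 2 ∧ j = 2) ∨ (i = 3 ∧ j = 3) then -(1/2) * pd 0 a x else 0
  else
    if (i = 2 ∧ j = 2) ∨ (i = 3 ∧ j = 3) then -(1/2) * pd 1 a x else 0

lemma Gam_def (a : (Fin 4 → ℝ) → ℝ) (k i j : Fin 4) : Gam a k i j = fun x =>
  if k = 0 then
    if (i = 0 ∧ j = 2) ∨ (i = 2 ∧ j = 0) then (1/2) * pd 0 a x
    else if (i = 1 ∧ j = 2) ∨ (i = 2 ∧ j = 1) then (1/2) * pd 1 a x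
    else if (i = 2 ∧ j = 3) ∨ (i = 3 ∧ j = 2) then (1/2) * pd 3 a x
    else if i = 2 ∧ j = 2 then (1/2) * (a x * pd 0 a x + pd 2 a x)
    else if i = 3 ∧ j = 3 then (1/2) * (a x * pd 0 a x - pd 2 a x)
    else 0
  else if k = 1 then
    if (i = 0 ∧ j = 3) ∨ (i = 3 ∧ j = 0) then (1/2) * pd 0 a x
    else if (i = 1 ∧ j = 3) ∨ (i = 3 ∧ j = 1) then (1/2) * pd 1 a x
    else if (i = 2 ∧ j = 3) ∨ (i = 3 ∧ j = 2) then (1/2) * pd 2 a x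
    else if i = 2 ∧ j = 2 then (1/2) * (a x * pd 1 a x - pd 3 a x)
    else if i = 3 ∧ j = 3 then (1/2) * (a x * pd 1 a x + pd 3 a x)
    else 0
  else if k = 2 then
    if (i = 2 ∧ j = 2) ∨ (i = 3 ∧ j = 3) then -(1/2) * pd 0 a x else 0
  else
    if (i = 2 ∧ j = 2) ∨ (i = 3 ∧ j = 3) then -(1/2) * pd 1 a x else 0 := rfl

lemma christoffel_eq (a : (Fin 4 → ℝ) → ℝ) (k i j : Fin 4) :
    christoffel a k i j = Gam a k i j := by
  funext x
  fin_cases k <;> fin_cases i <;> fin_cases j <;>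
    simp [christoffel, Gam, gUp, Fin.sum_univ_four, pd_gLow] <;> ring

/-- Closed form for the Ricci tensor of the Walker metric. -/
noncomputable def ricTable (a : (Fin 4 → ℝ) → ℝ) (j k : Fin 4) : (Fin 4 → ℝ) → ℝ := fun x =>
  if (j = 0 ∧ k = 2) ∨ (j = 2 ∧ k = 0) then (1/2) * pd 0 (pd 0 a) x
  else if (j = 0 ∧ k = 3) ∨ (j = 3 ∧ k = 0) ∨ (j = 1 ∧ k = 2) ∨ (j = 2 ∧ k = 1) then
    (1/2) * pd 0 (pd 1 a) x
  else if (j = 1 ∧ k = 3) ∨ (j = 3 ∧ k = 1) then (1/2) * pd 1 (pd 1 a) x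
  else if j = 2 ∧ k = 2 then
    (1/2) * ((pd 1 a x)^2 + a x * pd 0 (pd 0 a) x + a x * pd 1 (pd 1 a) x - 2 * pd 1 (pd 3 a) x)
  else if (j = 2 ∧ k = 3) ∨ (j = 3 ∧ k = 2) then
    (1/2) * (-(pd 0 a x * pd 1 a x) + pd 0 (pd 3 a) x + pd 1 (pd 2 a) x)
  else if j = 3 ∧ k = 3 then
    (1/2) * ((pd 0 a x)^2 + a x * pd 0 (pd 0 a) x - 2 * pd 0 (pd 2 a) x + a x * pd 1 (pd 1 a) x)
  else 0

set_option maxHeartbeats 4000000 in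
lemma ricci_eq (a : (Fin 4 → ℝ) → ℝ) (ha : ContDiff ℝ (⊤ : ℕ∞) a) (j k : Fin 4) (x : Fin 4 → ℝ) :
    ricci a j k x = ricTable a j k x := by
  have hda : Differentiable ℝ a := ha.differentiable (by simp)
  have hd0 : Differentiable ℝ (pd 0 a) := diff_pd ha 0
  have hd1 : Differentiable ℝ (pd 1 a) := diff_pd ha 1
  have hd2 : Differentiable ℝ (pd 2 a) := diff_pd ha 2
  have hd3 : Differentiable ℝ (pd 3 a) := diff_pd ha 3
  have c10 : ∀ y, pd 1 (pd 0 a) y = pd 0 (pd 1 a) y := fun y => pd_comm ha 1 0 y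
  have c20 : ∀ y, pd 2 (pd 0 a) y = pd 0 (pd 2 a) y := fun y => pd_comm ha 2 0 y
  have c30 : ∀ y, pd 3 (pd 0 a) y = pd 0 (pd 3 a) y := fun y => pd_comm ha 3 0 y
  have c21 : ∀ y, pd 2 (pd 1 a) y = pd 1 (pd 2 a) y := fun y => pd_comm ha 2 1 y
  have c31 : ∀ y, pd 3 (pd 1 a) y = pd 1 (pd 3 a) y := fun y => pd_comm ha 3 1 y
  have c32 : ∀ y, pd 3 (pd 2 a) y = pd 2 (pd 3 a) y := fun y => pd_comm ha 3 2 y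
  fin_cases j <;> fin_cases k <;>
    (simp only [ricci, curv, Fin.sum_univ_four, christoffel_eq, Gam_def, ricTable]
     try simp (config := { decide := true }) only [Fin.reduceEq, and_true, true_and, and_false,
       false_and, or_true, true_or, or_false, false_or, if_true, if_false, reduceIte]
     try simp (disch := fun_prop) only [pd_const_mul, pd_add, pd_sub, pd_mul, pd_zero]
     try simp only [c10, c20, c30, c21, c31, c32]
     try ring)

end WalkerAux

/-- the Ricci tensor of the Walker metric `g_a` is symmetric, has the stated
components, and all other components vanish identically. -/
theorem walker_ricci_tensor (a : (Fin 4 → ℝ) → ℝ) (ha : ContDiff ℝ (⊤ : ℕ∞) a) :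
    (∀ (j k : Fin 4) (x : Fin 4 → ℝ), ricci a j k x = ricci a k j x) ∧
    (∀ x : Fin 4 → ℝ,
      ricci a 0 2 x = (1/2) * pd 0 (pd 0 a) x ∧
      ricci a 0 3 x = (1/2) * pd 0 (pd 1 a) x ∧
      ricci a 1 2 x = (1/2) * pd 0 (pd 1 a) x ∧
      ricci a 1 3 x = (1/2) * pd 1 (pd 1 a) x ∧
      ricci a 2 2 x = (1/2) * ((pd 1 a x)^2 + a x * pd 0 (pd 0 a) x
        + a x * pd 1 (pd 1 a) x - 2 * pd 1 (pd 3 a) x) ∧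
      ricci a 2 3 x = (1/2) * (-(pd 0 a x * pd 1 a x) + pd 0 (pd 3 a) x + pd 1 (pd 2 a) x) ∧
      ricci a 3 3 x = (1/2) * ((pd 0 a x)^2 + a x * pd 0 (pd 0 a) x
        - 2 * pd 0 (pd 2 a) x + a x * pd 1 (pd 1 a) x)) ∧
    (∀ j k : Fin 4,
      (j, k) ∉ ([(0,2),(2,0),(0,3),(3,0),(1,2),(2,1),(1,3),(3,1),
        (2,2),(2,3),(3,2),(3,3)] : List (Fin 4 × Fin 4)) →
      ∀ x : Fin 4 → ℝ, ricci a j k x = 0) := by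
  refine ⟨?_, ?_, ?_⟩
  · intro j k x
    rw [ricci_eq a ha, ricci_eq a ha]
    fin_cases j <;> fin_cases k <;> simp [ricTable]
  · intro x
    refine ⟨?_, ?_, ?_, ?_, ?_, ?_, ?_⟩ <;> (rw [ricci_eq a ha]; simp [ricTable])
  · intro j k hjk x
    rw [ricci_eq a ha]
    fin_cases j <;> fin_cases k <;> simp_all [ricTable]
end

section
/- The Walker metric g_a with defining function a(x_1,x_2,x_3,x_4) = x_1·b(x_3,x_4) + x_2·c(x_3,x_4) + d(x_3,x_4) has parallel Ricci tensor, i.e. (∇_iρ)_{jk} = 0 for all i,j,k ∈ {1,2,3,4} at every point of ℝ⁴, if and only if the functions b and c satisfy at every point of ℝ²: b·b_3 − b_{33} = 0, c·c_4 − c_{44} = 0, 3c c_3 − 2c_{34} − 2b c_4 + c b_4 = 0, 4c b_3 + b c_3 − 2b_{34} − 2c_{33} − b b_4 = 0, c b_4 + 4b c_4 − 2b_{44} − 2c_{34} − c c_3 = 0, and 3b b_4 − 2b_{34} + b c_3 − 2c b_3 = 0. -/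
open scoped BigOperators

noncomputable def dl2 : List (Fin 2) → ((Fin 2 → ℝ) → ℝ) → ((Fin 2 → ℝ) → ℝ)
  | [], f => f
  | (i :: l), f => pd2 i (dl2 l f)

noncomputable def phiL : (Fin 4 → ℝ) →L[ℝ] (Fin 2 → ℝ) :=
  ContinuousLinearMap.pi ![ContinuousLinearMap.proj 2, ContinuousLinearMap.proj 3]

lemma phiL_apply (x : Fin 4 → ℝ) : phiL x = ![x 2, x 3] := by
  funext i
  fin_cases i <;> simp [phiL]

noncomputable def lift2 (f : (Fin 2 → ℝ) → ℝ) : (Fin 4 → ℝ) → ℝ := fun x => f ![x 2, x 3]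

lemma lift2_eq (f : (Fin 2 → ℝ) → ℝ) : lift2 f = fun x => f (phiL x) := by
  funext x; rw [phiL_apply]; rfl

lemma contDiff_pd2 {f : (Fin 2 → ℝ) → ℝ} (hf : ContDiff ℝ (⊤ : ℕ∞) f) (i : Fin 2) :
    ContDiff ℝ (⊤ : ℕ∞) (pd2 i f) := by
  have h1 : ContDiff ℝ (⊤ : ℕ∞) (fderiv ℝ f) := hf.fderiv_right (by simp)
  exact h1.clm_apply contDiff_const

lemma contDiff_dl2 {f : (Fin 2 → ℝ) → ℝ} (hf : ContDiff ℝ (⊤ : ℕ∞) f) (ds : List (Fin 2)) :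
    ContDiff ℝ (⊤ : ℕ∞) (dl2 ds f) := by
  induction ds with
  | nil => exact hf
  | cons i l ih => exact contDiff_pd2 ih i

lemma contDiff_lift2 {f : (Fin 2 → ℝ) → ℝ} (hf : ContDiff ℝ (⊤ : ℕ∞) f) :
    ContDiff ℝ (⊤ : ℕ∞) (lift2 f) := by
  rw [lift2_eq]
  exact hf.comp phiL.contDiff

lemma pd2_comm {f : (Fin 2 → ℝ) → ℝ} (hf : ContDiff ℝ (⊤ : ℕ∞) f) (i j : Fin 2) (p : Fin 2 → ℝ) :
    pd2 i (pd2 j f) p = pd2 j (pd2 i f) p := by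
  have hsymm : IsSymmSndFDerivAt ℝ f p := hf.contDiffAt.isSymmSndFDerivAt (by
    rw [minSmoothness_of_isRCLikeNormedField]; exact WithTop.coe_le_coe.2 (le_top : (2 : ℕ∞) ≤ ⊤))
  have hder : ContDiff ℝ (⊤ : ℕ∞) (fderiv ℝ f) := hf.fderiv_right (by simp)
  have key : ∀ v : Fin 2 → ℝ, ∀ q : Fin 2 → ℝ,
      fderiv ℝ (fun y => fderiv ℝ f y v) q
        = (fderiv ℝ (fderiv ℝ f) q).flip v := by
    intro v q
    have h1 : DifferentiableAt ℝ (fderiv ℝ f) q :=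
      (hder.differentiable (by simp)).differentiableAt
    have := fderiv_clm_apply h1 (differentiableAt_const v)
    simpa using this
  show fderiv ℝ (pd2 j f) p (Pi.single i 1) = fderiv ℝ (pd2 i f) p (Pi.single j 1)
  have e1 : pd2 j f = fun y => fderiv ℝ f y (Pi.single j 1) := rfl
  have e2 : pd2 i f = fun y => fderiv ℝ f y (Pi.single i 1) := rfl
  rw [e1, e2, key, key]
  exact hsymm _ _

lemma pd_lift2 {f : (Fin 2 → ℝ) → ℝ} (hf : ContDiff ℝ (⊤ : ℕ∞) f) (i : Fin 4) :
    pd i (lift2 f) = if i = 2 then lift2 (pd2 0 f) else if i = 3 then lift2 (pd2 1 f) else 0 := by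
  funext x
  have hdf : DifferentiableAt ℝ f (phiL x) := hf.differentiable (by simp) _
  have hcomp : fderiv ℝ (lift2 f) x = (fderiv ℝ f (phiL x)).comp phiL := by
    rw [lift2_eq]
    exact (hdf.hasFDerivAt.comp x phiL.hasFDerivAt).fderiv
  have hval : pd i (lift2 f) x = fderiv ℝ f (phiL x) (phiL (Pi.single i 1)) := by
    simp [pd, hcomp]
  by_cases h2 : i = 2
  · subst h2
    have h : phiL (Pi.single (2 : Fin 4) 1) = Pi.single (0 : Fin 2) 1 := by
      funext j; fin_cases j <;> simp [phiL]
    rw [hval, h]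
    simp [pd2, lift2, phiL_apply]
  by_cases h3 : i = 3
  · subst h3
    have h : phiL (Pi.single (3 : Fin 4) 1) = Pi.single (1 : Fin 2) 1 := by
      funext j; fin_cases j <;> simp [phiL]
    rw [hval, h]
    simp [pd2, lift2, phiL_apply, h2]
  · have h : phiL (Pi.single i 1) = 0 := by
      funext j
      fin_cases j <;> simp [phiL, Pi.single_apply] <;> omega
    rw [hval, h]
    simp [h2, h3]

inductive WE where
  | X : Fin 4 → WE
  | C : ℚ → WE
  | L : List (Fin 2) → Fin 3 → WE
  | add : WE → WE → WE
  | mul : WE → WE → WE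

noncomputable def weval (b c d : (Fin 2 → ℝ) → ℝ) : WE → (Fin 4 → ℝ) → ℝ
  | .X i => fun x => x i
  | .C q => fun _ => (q : ℝ)
  | .L ds w => lift2 (dl2 ds (![b, c, d] w))
  | .add e f => fun x => weval b c d e x + weval b c d f x
  | .mul e f => fun x => weval b c d e x * weval b c d f x

def wederiv (i : Fin 4) : WE → WE
  | .X j => if i = j then .C 1 else .C 0
  | .C _ => .C 0
  | .L ds w => if i = 2 then .L (0 :: ds) w else if i = 3 then .L (1 :: ds) w else .C 0
  | .add e f => .add (wederiv i e) (wederiv i f)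
  | .mul e f => .add (.mul (wederiv i e) f) (.mul e (wederiv i f))

section
variable {b c d : (Fin 2 → ℝ) → ℝ} (hb : ContDiff ℝ (⊤ : ℕ∞) b) (hc : ContDiff ℝ (⊤ : ℕ∞) c)
  (hd : ContDiff ℝ (⊤ : ℕ∞) d)

include hb hc hd in
lemma contDiff_sel (w : Fin 3) : ContDiff ℝ (⊤ : ℕ∞) (![b, c, d] w) := by
  fin_cases w <;> simpa

include hb hc hd in
lemma contDiff_weval (e : WE) : ContDiff ℝ (⊤ : ℕ∞) (weval b c d e) := by
  induction e with
  | X i => exact (ContinuousLinearMap.proj i : (Fin 4 → ℝ) →L[ℝ] ℝ).contDiff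
  | C q => exact contDiff_const
  | L ds w => exact contDiff_lift2 (contDiff_dl2 (contDiff_sel hb hc hd w) ds)
  | add e f he hf => exact he.add hf
  | mul e f he hf => exact he.mul hf

include hb hc hd in
lemma pd_weval (i : Fin 4) (e : WE) :
    pd i (weval b c d e) = weval b c d (wederiv i e) := by
  induction e with
  | X j =>
      funext x
      have hh : (fun x : Fin 4 → ℝ => x j) = (ContinuousLinearMap.proj j :
          (Fin 4 → ℝ) →L[ℝ] ℝ) := rfl
      by_cases h : i = j
      · subst h
        simp [pd, weval, wederiv, hh, ContinuousLinearMap.fderiv, Pi.single_apply]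
      · simp [pd, weval, wederiv, hh, ContinuousLinearMap.fderiv, Pi.single_apply, h,
          Ne.symm h]
  | C q => funext x; simp [pd, weval, wederiv]
  | L ds w =>
      rw [show weval b c d (.L ds w) = lift2 (dl2 ds (![b, c, d] w)) from rfl,
        pd_lift2 (contDiff_dl2 (contDiff_sel hb hc hd w) ds)]
      by_cases h2 : i = 2
      · subst h2; simp [wederiv, weval, dl2]
      by_cases h3 : i = 3
      · subst h3; simp [wederiv, weval, dl2, h2]
      · funext x; simp [wederiv, weval, h2, h3]
  | add e f he hf =>
      funext x
      have de := ((contDiff_weval hb hc hd e).differentiable (by simp)).differentiableAt (x := x)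
      have df := ((contDiff_weval hb hc hd f).differentiable (by simp)).differentiableAt (x := x)
      have hrw : weval b c d (.add e f) = fun x => weval b c d e x + weval b c d f x := rfl
      rw [hrw]
      simp only [pd, fderiv_fun_add de df]
      have := congrFun he x
      have := congrFun hf x
      simp only [pd] at *
      simp [wederiv, weval, *]
  | mul e f he hf =>
      funext x
      have de := ((contDiff_weval hb hc hd e).differentiable (by simp)).differentiableAt (x := x)
      have df := ((contDiff_weval hb hc hd f).differentiable (by simp)).differentiableAt (x := x)
      have hrw : weval b c d (.mul e f) = fun x => weval b c d e x * weval b c d f x := rfl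
      rw [hrw]
      simp only [pd, fderiv_fun_mul de df]
      have := congrFun he x
      have := congrFun hf x
      simp only [pd] at *
      simp [wederiv, weval, *]
      ring
end

def aE : WE := .add (.add (.mul (.X 0) (.L [] 0)) (.mul (.X 1) (.L [] 1))) (.L [] 2)
def gamT : Fin 4 → Fin 4 → Fin 4 → WE :=
  ![![![(.C 0),
      (.C 0),
      (.mul (.C (1/2)) (.L [] 0)),
      (.C 0)],
    ![(.C 0),
      (.C 0),
      (.mul (.C (1/2)) (.L [] 1)),
      (.C 0)],
    ![(.mul (.C (1/2)) (.L [] 0)),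
      (.mul (.C (1/2)) (.L [] 1)),
      (.add (.add (.add (.add (.add (.mul (.mul (.mul (.C (1/2)) (.L [] 0)) (.L [] 0)) (.X 0)) (.mul (.mul (.mul (.C (1/2)) (.L [] 0)) (.L [] 1)) (.X 1))) (.mul (.mul (.C (1/2)) (.L [] 0)) (.L [] 2))) (.mul (.mul (.C (1/2)) (.L [0] 0)) (.X 0))) (.mul (.mul (.C (1/2)) (.L [0] 1)) (.X 1))) (.mul (.C (1/2)) (.L [0] 2))),
      (.add (.add (.mul (.mul (.C (1/2)) (.L [1] 0)) (.X 0)) (.mul (.mul (.C (1/2)) (.L [1] 1)) (.X 1))) (.mul (.C (1/2)) (.L [1] 2)))],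
    ![(.C 0),
      (.C 0),
      (.add (.add (.mul (.mul (.C (1/2)) (.L [1] 0)) (.X 0)) (.mul (.mul (.C (1/2)) (.L [1] 1)) (.X 1))) (.mul (.C (1/2)) (.L [1] 2))),
      (.add (.add (.add (.add (.add (.mul (.mul (.mul (.C (1/2)) (.L [] 0)) (.L [] 0)) (.X 0)) (.mul (.mul (.mul (.C (1/2)) (.L [] 0)) (.L [] 1)) (.X 1))) (.mul (.mul (.C (1/2)) (.L [] 0)) (.L [] 2))) (.mul (.mul (.C (-1/2)) (.L [0] 0)) (.X 0))) (.mul (.mul (.C (-1/2)) (.L [0] 1)) (.X 1))) (.mul (.C (-1/2)) (.L [0] 2)))]],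
  ![![(.C 0),
      (.C 0),
      (.C 0),
      (.mul (.C (1/2)) (.L [] 0))],
    ![(.C 0),
      (.C 0),
      (.C 0),
      (.mul (.C (1/2)) (.L [] 1))],
    ![(.C 0),
      (.C 0),
      (.add (.add (.add (.add (.add (.mul (.mul (.mul (.C (1/2)) (.L [] 0)) (.L [] 1)) (.X 0)) (.mul (.mul (.C (-1/2)) (.L [1] 0)) (.X 0))) (.mul (.mul (.mul (.C (1/2)) (.L [] 1)) (.L [] 1)) (.X 1))) (.mul (.mul (.C (1/2)) (.L [] 1)) (.L [] 2))) (.mul (.mul (.C (-1/2)) (.L [1] 1)) (.X 1))) (.mul (.C (-1/2)) (.L [1] 2))),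
      (.add (.add (.mul (.mul (.C (1/2)) (.L [0] 0)) (.X 0)) (.mul (.mul (.C (1/2)) (.L [0] 1)) (.X 1))) (.mul (.C (1/2)) (.L [0] 2)))],
    ![(.mul (.C (1/2)) (.L [] 0)),
      (.mul (.C (1/2)) (.L [] 1)),
      (.add (.add (.mul (.mul (.C (1/2)) (.L [0] 0)) (.X 0)) (.mul (.mul (.C (1/2)) (.L [0] 1)) (.X 1))) (.mul (.C (1/2)) (.L [0] 2))),
      (.add (.add (.add (.add (.add (.mul (.mul (.mul (.C (1/2)) (.L [] 0)) (.L [] 1)) (.X 0)) (.mul (.mul (.C (1/2)) (.L [1] 0)) (.X 0))) (.mul (.mul (.mul (.C (1/2)) (.L [] 1)) (.L [] 1)) (.X 1))) (.mul (.mul (.C (1/2)) (.L [] 1)) (.L [] 2))) (.mul (.mul (.C (1/2)) (.L [1] 1)) (.X 1))) (.mul (.C (1/2)) (.L [1] 2)))]],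
  ![![(.C 0),
      (.C 0),
      (.C 0),
      (.C 0)],
    ![(.C 0),
      (.C 0),
      (.C 0),
      (.C 0)],
    ![(.C 0),
      (.C 0),
      (.mul (.C (-1/2)) (.L [] 0)),
      (.C 0)],
    ![(.C 0),
      (.C 0),
      (.C 0),
      (.mul (.C (-1/2)) (.L [] 0))]],
  ![![(.C 0),
      (.C 0),
      (.C 0),
      (.C 0)],
    ![(.C 0),
      (.C 0),
      (.C 0),
      (.C 0)],
    ![(.C 0),
      (.C 0),
      (.mul (.C (-1/2)) (.L [] 1)),
      (.C 0)],
    ![(.C 0),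
      (.C 0),
      (.C 0),
      (.mul (.C (-1/2)) (.L [] 1))]]]

def ricT : Fin 4 → Fin 4 → WE :=
  ![![(.C 0),
    (.C 0),
    (.C 0),
    (.C 0)],
  ![(.C 0),
    (.C 0),
    (.C 0),
    (.C 0)],
  ![(.C 0),
    (.C 0),
    (.add (.mul (.mul (.C (1/2)) (.L [] 1)) (.L [] 1)) (.mul (.C (-1/1)) (.L [1] 1))),
    (.add (.add (.mul (.mul (.C (-1/2)) (.L [] 0)) (.L [] 1)) (.mul (.C (1/2)) (.L [1] 0))) (.mul (.C (1/2)) (.L [0] 1)))],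
  ![(.C 0),
    (.C 0),
    (.add (.add (.mul (.mul (.C (-1/2)) (.L [] 0)) (.L [] 1)) (.mul (.C (1/2)) (.L [1] 0))) (.mul (.C (1/2)) (.L [0] 1))),
    (.add (.mul (.mul (.C (1/2)) (.L [] 0)) (.L [] 0)) (.mul (.C (-1/1)) (.L [0] 0)))]]

def covT : Fin 4 → Fin 4 → Fin 4 → WE :=
  ![![![(.C 0),
      (.C 0),
      (.C 0),
      (.C 0)],
    ![(.C 0),
      (.C 0),
      (.C 0),
      (.C 0)],
    ![(.C 0),
      (.C 0),
      (.C 0),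
      (.C 0)],
    ![(.C 0),
      (.C 0),
      (.C 0),
      (.C 0)]],
  ![![(.C 0),
      (.C 0),
      (.C 0),
      (.C 0)],
    ![(.C 0),
      (.C 0),
      (.C 0),
      (.C 0)],
    ![(.C 0),
      (.C 0),
      (.C 0),
      (.C 0)],
    ![(.C 0),
      (.C 0),
      (.C 0),
      (.C 0)]],
  ![![(.C 0),
      (.C 0),
      (.C 0),
      (.C 0)],
    ![(.C 0),
      (.C 0),
      (.C 0),
      (.C 0)],
    ![(.C 0),
      (.C 0),
      (.add (.add (.add (.mul (.mul (.C (-1/1)) (.L [] 0)) (.L [1] 1)) (.mul (.mul (.C (1/2)) (.L [1] 0)) (.L [] 1))) (.mul (.mul (.C (3/2)) (.L [] 1)) (.L [0] 1))) (.mul (.C (-1/1)) (.L [0, 1] 1))),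
      (.add (.add (.add (.add (.mul (.mul (.C (1/4)) (.L [] 0)) (.L [1] 0)) (.mul (.mul (.C (-1/4)) (.L [] 0)) (.L [0] 1))) (.mul (.C (1/2)) (.L [0, 1] 0))) (.mul (.mul (.C (-1/1)) (.L [0] 0)) (.L [] 1))) (.mul (.C (1/2)) (.L [0, 0] 1)))],
    ![(.C 0),
      (.C 0),
      (.add (.add (.add (.add (.mul (.mul (.C (1/4)) (.L [] 0)) (.L [1] 0)) (.mul (.mul (.C (-1/4)) (.L [] 0)) (.L [0] 1))) (.mul (.C (1/2)) (.L [0, 1] 0))) (.mul (.mul (.C (-1/1)) (.L [0] 0)) (.L [] 1))) (.mul (.C (1/2)) (.L [0, 0] 1))),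
      (.add (.mul (.mul (.C (1/1)) (.L [] 0)) (.L [0] 0)) (.mul (.C (-1/1)) (.L [0, 0] 0)))]],
  ![![(.C 0),
      (.C 0),
      (.C 0),
      (.C 0)],
    ![(.C 0),
      (.C 0),
      (.C 0),
      (.C 0)],
    ![(.C 0),
      (.C 0),
      (.add (.mul (.mul (.C (1/1)) (.L [] 1)) (.L [1] 1)) (.mul (.C (-1/1)) (.L [1, 1] 1))),
      (.add (.add (.add (.add (.mul (.mul (.C (-1/1)) (.L [] 0)) (.L [1] 1)) (.mul (.C (1/2)) (.L [1, 1] 0))) (.mul (.mul (.C (-1/4)) (.L [1] 0)) (.L [] 1))) (.mul (.mul (.C (1/4)) (.L [] 1)) (.L [0] 1))) (.mul (.C (1/2)) (.L [1, 0] 1)))],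
    ![(.C 0),
      (.C 0),
      (.add (.add (.add (.add (.mul (.mul (.C (-1/1)) (.L [] 0)) (.L [1] 1)) (.mul (.C (1/2)) (.L [1, 1] 0))) (.mul (.mul (.C (-1/4)) (.L [1] 0)) (.L [] 1))) (.mul (.mul (.C (1/4)) (.L [] 1)) (.L [0] 1))) (.mul (.C (1/2)) (.L [1, 0] 1))),
      (.add (.add (.add (.mul (.mul (.C (3/2)) (.L [] 0)) (.L [1] 0)) (.mul (.mul (.C (1/2)) (.L [] 0)) (.L [0] 1))) (.mul (.mul (.C (-1/1)) (.L [0] 0)) (.L [] 1))) (.mul (.C (-1/1)) (.L [1, 0] 0)))]]]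


section
variable {b c d : (Fin 2 → ℝ) → ℝ} (hb : ContDiff ℝ (⊤ : ℕ∞) b) (hc : ContDiff ℝ (⊤ : ℕ∞) c)
  (hd : ContDiff ℝ (⊤ : ℕ∞) d)

set_option maxHeartbeats 8000000 in
include hb hc hd in
lemma chrW : ∀ k i j : Fin 4,
    christoffel (weval b c d aE) k i j = weval b c d (gamT k i j) := by
  intro k i j
  fin_cases k <;> fin_cases i <;> fin_cases j
  all_goals
    funext x
    simp only [christoffel, Fin.sum_univ_four, pd_gLow, gUp, pd_weval hb hc hd]
    simp +decide [gamT, aE, wederiv, weval, dl2]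
    try ring

set_option maxHeartbeats 8000000 in
include hb hc hd in
lemma ricW : ∀ j k : Fin 4,
    ricci (weval b c d aE) j k = weval b c d (ricT j k) := by
  intro j k
  fin_cases j <;> fin_cases k
  all_goals
    funext x
    simp only [ricci, curv, Fin.sum_univ_four, chrW hb hc hd, pd_weval hb hc hd]
    simp +decide [gamT, ricT, wederiv, weval, dl2]
    try ring

set_option maxHeartbeats 8000000 in
include hb hc hd in
lemma covW : ∀ i j k : Fin 4,
    covRicci (weval b c d aE) i j k = weval b c d (covT i j k) := by
  intro i j k
  fin_cases i <;> fin_cases j <;> fin_cases k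
  all_goals
    funext x
    simp only [covRicci, Fin.sum_univ_four, ricW hb hc hd, chrW hb hc hd,
      pd_weval hb hc hd]
    simp +decide [gamT, ricT, covT, wederiv, weval, dl2]
    try ring
end
set_option maxHeartbeats 8000000 in
/-- the restricted Walker metric has parallel Ricci tensor iff `b` and `c`
satisfy the six stated PDEs everywhere on `ℝ²`. -/
theorem walker_restricted_parallel_ricci_iff (b c d : (Fin 2 → ℝ) → ℝ)
    (hb : ContDiff ℝ (⊤ : ℕ∞) b) (hc : ContDiff ℝ (⊤ : ℕ∞) c) (hd : ContDiff ℝ (⊤ : ℕ∞) d)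
    (a : (Fin 4 → ℝ) → ℝ)
    (ha : ∀ x : Fin 4 → ℝ, a x = x 0 * b ![x 2, x 3] + x 1 * c ![x 2, x 3] + d ![x 2, x 3]) :
    (∀ (i j k : Fin 4) (x : Fin 4 → ℝ), covRicci a i j k x = 0)
    ↔ (∀ p : Fin 2 → ℝ,
        b p * pd2 0 b p - pd2 0 (pd2 0 b) p = 0 ∧
        c p * pd2 1 c p - pd2 1 (pd2 1 c) p = 0 ∧
        3 * c p * pd2 0 c p - 2 * pd2 0 (pd2 1 c) p - 2 * b p * pd2 1 c p
          + c p * pd2 1 b p = 0 ∧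
        4 * c p * pd2 0 b p + b p * pd2 0 c p - 2 * pd2 0 (pd2 1 b) p
          - 2 * pd2 0 (pd2 0 c) p - b p * pd2 1 b p = 0 ∧
        c p * pd2 1 b p + 4 * b p * pd2 1 c p - 2 * pd2 1 (pd2 1 b) p
          - 2 * pd2 0 (pd2 1 c) p - c p * pd2 0 c p = 0 ∧
        3 * b p * pd2 1 b p - 2 * pd2 0 (pd2 1 b) p + b p * pd2 0 c p
          - 2 * c p * pd2 0 b p = 0) := by
  have haa : a = weval b c d aE := by
    funext x; rw [ha x]; rfl
  subst haa
  constructor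
  · intro h p
    set x : Fin 4 → ℝ := ![0, 0, p 0, p 1] with hxdef
    have hx : (![x 2, x 3] : Fin 2 → ℝ) = p := by
      funext i; fin_cases i <;> simp [hxdef]
    have key : ∀ i j k : Fin 4, weval b c d (covT i j k) x = 0 := by
      intro i j k
      have hh := h i j k x
      rwa [covW hb hc hd i j k] at hh
    have k233 := key 2 3 3
    rw [show weval b c d (covT 2 3 3) x
        = b p * pd2 0 b p - pd2 0 (pd2 0 b) p from by
      simp +decide [covT, weval, dl2, lift2, hx]; try ring] at k233
    have k322 := key 3 2 2
    rw [show weval b c d (covT 3 2 2) x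
        = c p * pd2 1 c p - pd2 1 (pd2 1 c) p from by
      simp +decide [covT, weval, dl2, lift2, hx]; try ring] at k322
    have k222 := key 2 2 2
    rw [show weval b c d (covT 2 2 2) x
        = -(b p * pd2 1 c p) + (1/2) * (pd2 1 b p * c p)
          + (3/2) * (c p * pd2 0 c p) - pd2 0 (pd2 1 c) p from by
      simp +decide [covT, weval, dl2, lift2, hx]; try ring] at k222
    have k223 := key 2 2 3
    rw [show weval b c d (covT 2 2 3) x
        = (1/4) * (b p * pd2 1 b p) - (1/4) * (b p * pd2 0 c p)
          + (1/2) * pd2 0 (pd2 1 b) p - pd2 0 b p * c p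
          + (1/2) * pd2 0 (pd2 0 c) p from by
      simp +decide [covT, weval, dl2, lift2, hx]; try ring] at k223
    have k323 := key 3 2 3
    rw [show weval b c d (covT 3 2 3) x
        = -(b p * pd2 1 c p) + (1/2) * pd2 1 (pd2 1 b) p
          - (1/4) * (pd2 1 b p * c p) + (1/4) * (c p * pd2 0 c p)
          + (1/2) * pd2 1 (pd2 0 c) p from by
      simp +decide [covT, weval, dl2, lift2, hx]; try ring] at k323
    have k333 := key 3 3 3
    rw [show weval b c d (covT 3 3 3) x
        = (3/2) * (b p * pd2 1 b p) + (1/2) * (b p * pd2 0 c p)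
          - pd2 0 b p * c p - pd2 1 (pd2 0 b) p from by
      simp +decide [covT, weval, dl2, lift2, hx]; try ring] at k333
    refine ⟨by linear_combination k233, by linear_combination k322,
      by linear_combination 2 * k222, by linear_combination (-4 : ℝ) * k223,
      by linear_combination (-4 : ℝ) * k323 + (-2 : ℝ) * pd2_comm hc 0 1 p,
      by linear_combination 2 * k333 + (-2 : ℝ) * pd2_comm hb 0 1 p⟩
  · intro h i j k x
    rw [show covRicci (weval b c d aE) i j k x = weval b c d (covT i j k) x from
      congrFun (covW hb hc hd i j k) x]
    obtain ⟨h1, h2, h3, h4, h5, h6⟩ := h ![x 2, x 3]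
    show weval b c d (covT i j k) x = 0
    fin_cases i <;> fin_cases j <;> fin_cases k
    all_goals simp +decide [covT, weval, dl2, lift2]
    all_goals
      first
      | linear_combination h1
      | linear_combination h2
      | linear_combination (1/2 : ℝ) * h3
      | linear_combination (-(1/4) : ℝ) * h4
      | linear_combination (-(1/4) : ℝ) * h5 + (1/2 : ℝ) * pd2_comm hc 1 0 ![x 2, x 3]
      | linear_combination (1/2 : ℝ) * h6 - pd2_comm hb 1 0 ![x 2, x 3]
end
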